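/- arXiv:1412.6368 — 8 statements merged into one kernel-verified Lean document; each statement's English description precedes it below -/
import Mathlib

section
/- If (T_n) are the arrival times of a Poisson process with rate 1, then for any x > 0 the counting variable M_x = card{ n ≥ 1 : T_n ≤ t_x } follows a Poisson distribution with parameter t_x. In particular, for the increasing random walk built from a continuous random variable X, M_x ~ Poisson(-log p_x) where p_x = P(X > x). -/
/-! The partial sums `Sₙ = E₀ + ⋯ + Eₙ₋₁` have the Erlang law: by independence the law of `Sₙ₊₁`
is the convolution of `Exp(1)` with the law of `Sₙ`, and integrating the density gives
`P(Sₙ ≤ t) = 1 - e⁻ᵗ ∑_{j<n} tʲ/j!`. This tends to `0` as `n → ∞`, so almost surely the (almost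
surely nondecreasing) sums eventually exceed `t`, and then `M_t ≥ m ↔ S_m ≤ t`. Hence
`P(M_t = k) = P(S_k ≤ t) - P(S_{k+1} ≤ t) = e⁻ᵗ tᵏ/k!`. -/

open MeasureTheory ProbabilityTheory Real Set Filter Topology
open scoped ENNReal Nat

noncomputable def erlangCDF (n : ℕ) (y : ℝ) : ℝ :=
  if 0 ≤ y then 1 - exp (-y) * ∑ j ∈ Finset.range n, y ^ j / j ! else 0

lemma erlangCDF_of_nonneg (n : ℕ) {y : ℝ} (hy : 0 ≤ y) :
    erlangCDF n y = 1 - exp (-y) * ∑ j ∈ Finset.range n, y ^ j / j ! :=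
  if_pos hy

lemma erlangCDF_of_neg (n : ℕ) {y : ℝ} (hy : y < 0) : erlangCDF n y = 0 :=
  if_neg hy.not_ge

lemma measurable_erlangCDF (n : ℕ) : Measurable (erlangCDF n) :=
  Measurable.ite measurableSet_Ici (by fun_prop) measurable_const

lemma erlangCDF_nonneg (n : ℕ) (y : ℝ) : 0 ≤ erlangCDF n y := by
  rcases lt_or_ge y 0 with hy | hy
  · rw [erlangCDF_of_neg n hy]
  · have hsum : exp (-y) * ∑ j ∈ Finset.range n, y ^ j / j ! ≤ exp (-y) * exp y :=
      mul_le_mul_of_nonneg_left (sum_le_exp_of_nonneg hy n) (exp_pos _).le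
    rw [← exp_add, neg_add_cancel, exp_zero] at hsum
    rw [erlangCDF_of_nonneg n hy]
    linarith

lemma erlangCDF_sub_erlangCDF_succ (n : ℕ) {y : ℝ} (hy : 0 ≤ y) :
    erlangCDF n y - erlangCDF (n + 1) y = exp (-y) * y ^ n / n ! := by
  rw [erlangCDF_of_nonneg n hy, erlangCDF_of_nonneg (n + 1) hy, Finset.sum_range_succ]
  ring

lemma tendsto_erlangCDF_atTop (y : ℝ) : Tendsto (erlangCDF · y) atTop (𝓝 0) := by
  rcases lt_or_ge y 0 with hy | hy
  · simp only [erlangCDF_of_neg _ hy, tendsto_const_nhds]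
  · have hexp : Tendsto (fun n ↦ ∑ j ∈ Finset.range n, y ^ j / j !) atTop (𝓝 (exp y)) := by
      have h := NormedSpace.expSeries_div_hasSum_exp y
      rw [← exp_eq_exp_ℝ] at h
      exact h.tendsto_sum_nat
    have hlim := (hexp.const_mul (exp (-y))).const_sub 1
    rw [← exp_add, neg_add_cancel, exp_zero, sub_self] at hlim
    simpa only [erlangCDF_of_nonneg _ hy] using hlim

lemma integral_exp_neg_sub_mul_sum (n : ℕ) (y : ℝ) :
    ∫ x in 0..y, (exp (-x) - exp (-y) * ∑ j ∈ Finset.range n, (y - x) ^ j / j !) =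
      1 - exp (-y) * ∑ j ∈ Finset.range (n + 1), y ^ j / j ! := by
  have hexp : ∫ x in 0..y, exp (-x) = 1 - exp (-y) := by
    simp [intervalIntegral.integral_comp_neg fun x ↦ exp x, integral_exp]
  have hpow (j : ℕ) : ∫ x in 0..y, (y - x) ^ j / j ! = y ^ (j + 1) / (j + 1)! := by
    rw [intervalIntegral.integral_div, intervalIntegral.integral_comp_sub_left fun x ↦ x ^ j,
      sub_self, sub_zero, integral_pow, Nat.factorial_succ]
    push_cast
    field_simp
    ring
  rw [intervalIntegral.integral_sub ((by fun_prop : Continuous _).intervalIntegrable _ _)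
      ((by fun_prop : Continuous _).intervalIntegrable _ _), intervalIntegral.integral_const_mul,
    intervalIntegral.integral_finsetSum
      fun _ _ ↦ (by fun_prop : Continuous _).intervalIntegrable _ _,
    hexp, Finset.sum_congr rfl fun j _ ↦ hpow j, Finset.sum_range_succ' (fun j ↦ y ^ j / j !)]
  simp only [pow_zero, Nat.factorial_zero, Nat.cast_one, div_one]
  ring

lemma lintegral_erlangCDF_sub_expMeasure (n : ℕ) (y : ℝ) :
    ∫⁻ x, ENNReal.ofReal (erlangCDF n (y - x)) ∂expMeasure 1 =
      ENNReal.ofReal (erlangCDF (n + 1) y) := by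
  set h : ℝ → ℝ := fun x ↦ exp (-x) - exp (-y) * ∑ j ∈ Finset.range n, ((y - x) ^ j / j !)
  have hfactor {x : ℝ} (hx : x ≤ y) : exp (-x) * erlangCDF n (y - x) = h x := by
    rw [erlangCDF_of_nonneg n (sub_nonneg.2 hx), mul_sub, mul_one, ← mul_assoc, ← exp_add]
    simp only [h]
    ring_nf
  have hintegrand (x : ℝ) : exponentialPDF 1 x * ENNReal.ofReal (erlangCDF n (y - x)) =
      (Icc 0 y).indicator (fun x ↦ ENNReal.ofReal (h x)) x := by
    rcases lt_or_ge x 0 with hx0 | hx0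
    · simp [exponentialPDF_of_neg hx0, hx0.not_ge]
    rcases le_or_gt x y with hxy | hxy
    · rw [indicator_of_mem (show x ∈ Icc 0 y from ⟨hx0, hxy⟩), exponentialPDF_of_nonneg hx0,
        ← ENNReal.ofReal_mul (by positivity), one_mul, one_mul, hfactor hxy]
    · simp [erlangCDF_of_neg n (sub_neg.2 hxy), hxy.not_ge]
  have hdensity : expMeasure 1 = volume.withDensity (exponentialPDF 1) := rfl
  have hpdf : Measurable (exponentialPDF 1) := (measurable_exponentialPDFReal 1).ennreal_ofReal
  have hmeas : Measurable fun x ↦ ENNReal.ofReal (erlangCDF n (y - x)) :=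
    ((measurable_erlangCDF n).comp (measurable_const.sub measurable_id)).ennreal_ofReal
  rw [hdensity, lintegral_withDensity_eq_lintegral_mul _ hpdf hmeas]
  simp only [Pi.mul_apply, hintegrand, lintegral_indicator measurableSet_Icc]
  rcases lt_or_ge y 0 with hy | hy
  · simp [Icc_eq_empty_of_lt hy, erlangCDF_of_neg _ hy]
  have hnonneg : 0 ≤ᵐ[volume.restrict (Icc 0 y)] h :=
    (ae_restrict_iff' measurableSet_Icc).2 <| ae_of_all _ fun x hx ↦ by
      rw [Pi.zero_apply, ← hfactor hx.2]
      exact mul_nonneg (exp_pos _).le (erlangCDF_nonneg _ _)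
  rw [← ofReal_integral_eq_lintegral_ofReal
    (by fun_prop : Continuous h).integrableOn_Icc hnonneg, integral_Icc_eq_integral_Ioc,
    ← intervalIntegral.integral_of_le hy, integral_exp_neg_sub_mul_sum, erlangCDF_of_nonneg _ hy]

lemma conv_apply_Iic (μ ν : Measure ℝ) [SFinite ν] (y : ℝ) :
    (μ ∗ ν) (Iic y) = ∫⁻ x, ν (Iic (y - x)) ∂μ := by
  have hm : MeasurableSet {p : ℝ × ℝ | p.1 + p.2 ≤ y} :=
    measurableSet_le (by fun_prop) (by fun_prop)
  rw [Measure.conv, Measure.map_apply measurable_add measurableSet_Iic]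
  refine (Measure.prod_apply hm).trans (lintegral_congr fun x ↦ ?_)
  congr 1
  ext s
  simp [le_sub_iff_add_le']

section Law

variable {Ω : Type*} [MeasurableSpace Ω] {μ : Measure Ω}

lemma map_eq_expMeasure [IsFiniteMeasure μ] {r : ℝ} (hr : 0 < r) {X : Ω → ℝ} (hX : Measurable X)
    (hcdf : ∀ x, 0 ≤ x → μ {ω | X ω ≤ x} = ENNReal.ofReal (1 - exp (-(r * x)))) :
    μ.map X = expMeasure r := by
  have := isProbabilityMeasure_expMeasure hr
  refine Measure.ext_of_Iic _ _ fun a ↦ ?_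
  rw [Measure.map_apply hX measurableSet_Iic, ← ofReal_cdf, cdf_expMeasure_eq hr]
  split_ifs with ha
  · exact hcdf a ha
  · have h0 : μ {ω | X ω ≤ 0} = 0 := by simpa using hcdf 0 le_rfl
    rw [ENNReal.ofReal_zero]
    exact measure_mono_null (fun ω (hω : X ω ≤ a) ↦ (hω.trans (not_le.1 ha).le : X ω ≤ 0)) h0

lemma ae_nonneg_of_map_eq_expMeasure {r : ℝ} {X : Ω → ℝ} (hX : Measurable X)
    (hlaw : μ.map X = expMeasure r) : ∀ᵐ ω ∂μ, 0 ≤ X ω := by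
  have hIio : expMeasure r (Iio 0) = 0 := by
    rw [expMeasure, gammaMeasure, withDensity_apply _ measurableSet_Iio]
    exact lintegral_exponentialPDF_of_nonpos le_rfl
  have hpre : {ω | ¬0 ≤ X ω} = X ⁻¹' Iio 0 := by ext; simp
  rw [ae_iff, hpre, ← Measure.map_apply hX measurableSet_Iio, hlaw, hIio]

end Law

-- `hex` makes the set finite; otherwise its `ncard` would be the junk value `0`.
lemma le_ncard_setOf_le_iff {α : Type*} [LinearOrder α] {T : ℕ → α} (hT : Monotone T) {t : α}
    (h0 : T 0 ≤ t) (hex : ∃ n, t < T n) (k : ℕ) :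
    k ≤ {n | 1 ≤ n ∧ T n ≤ t}.ncard ↔ T k ≤ t := by
  classical
  have hle (n : ℕ) : T n ≤ t ↔ n < Nat.find hex :=
    ⟨fun hn ↦ not_le.1 fun hN ↦ (Nat.find_spec hex).not_ge ((hT hN).trans hn),
      fun hn ↦ not_lt.1 (Nat.find_min hex hn)⟩
  have hset : {n | 1 ≤ n ∧ T n ≤ t} = Ico 1 (Nat.find hex) := by
    ext n
    simp only [mem_ofPred_eq, mem_Ico, hle]
  have := (hle 0).1 h0
  rw [hset, ncard_Ico_nat, hle]
  omega

section PartialSums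

variable {Ω : Type*} [MeasurableSpace Ω] {μ : Measure Ω} [IsProbabilityMeasure μ]
  {E : ℕ → Ω → ℝ}

lemma measure_sum_range_le_eq_erlangCDF (hmeas : ∀ i, Measurable (E i)) (hindep : iIndepFun E μ)
    (hlaw : ∀ i, μ.map (E i) = expMeasure 1) (n : ℕ) (y : ℝ) :
    μ {ω | ∑ i ∈ Finset.range n, E i ω ≤ y} = ENNReal.ofReal (erlangCDF n y) := by
  induction n generalizing y with
  | zero =>
    rcases lt_or_ge y 0 with hy | hy
    · simp [erlangCDF_of_neg _ hy, hy.not_ge]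
    · simp [erlangCDF_of_nonneg _ hy, hy]
  | succ n ih =>
    have hS : Measurable (∑ i ∈ Finset.range n, E i) := by
      rw [Finset.sum_fn]
      exact Finset.measurable_sum _ fun i _ ↦ hmeas i
    have hindep' : IndepFun (E n) (∑ i ∈ Finset.range n, E i) μ :=
      (hindep.indepFun_finsetSum_of_notMem hmeas Finset.notMem_range_self).symm
    calc μ {ω | ∑ i ∈ Finset.range (n + 1), E i ω ≤ y}
        = μ.map (E n + ∑ i ∈ Finset.range n, E i) (Iic y) := by
          rw [Measure.map_apply ((hmeas n).add hS) measurableSet_Iic]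
          congr 1
          ext ω
          simp [Finset.sum_range_succ_comm]
      _ = ∫⁻ x, μ.map (∑ i ∈ Finset.range n, E i) (Iic (y - x)) ∂expMeasure 1 := by
          rw [hindep'.map_add_eq_map_conv_map (hmeas n) hS, conv_apply_Iic, hlaw]
      _ = ∫⁻ x, ENNReal.ofReal (erlangCDF n (y - x)) ∂expMeasure 1 := by
          congr with x
          rw [Measure.map_apply hS measurableSet_Iic, ← ih]
          congr 1
          ext ω
          simp
      _ = ENNReal.ofReal (erlangCDF (n + 1) y) := lintegral_erlangCDF_sub_expMeasure n y

lemma ae_exists_lt_sum_range (hmeas : ∀ i, Measurable (E i)) (hindep : iIndepFun E μ)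
    (hlaw : ∀ i, μ.map (E i) = expMeasure 1) (t : ℝ) :
    ∀ᵐ ω ∂μ, ∃ n, t < ∑ i ∈ Finset.range n, E i ω := by
  have hlim : Tendsto (fun n ↦ ENNReal.ofReal (erlangCDF n t)) atTop (𝓝 0) := by
    simpa using ENNReal.tendsto_ofReal (tendsto_erlangCDF_atTop t)
  simp only [ae_iff, not_exists, not_lt]
  refine le_antisymm (ge_of_tendsto' hlim fun n ↦ ?_) bot_le
  rw [← measure_sum_range_le_eq_erlangCDF hmeas hindep hlaw]
  exact measure_mono fun ω hω ↦ hω n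

lemma setOf_le_ncard_ae_eq (hmeas : ∀ i, Measurable (E i)) (hindep : iIndepFun E μ)
    (hlaw : ∀ i, μ.map (E i) = expMeasure 1) {t : ℝ} (ht : 0 ≤ t) (m : ℕ) :
    {ω | m ≤ {n | 1 ≤ n ∧ ∑ i ∈ Finset.range n, E i ω ≤ t}.ncard} =ᵐ[μ]
      {ω | ∑ i ∈ Finset.range m, E i ω ≤ t} := by
  have hnonneg : ∀ᵐ ω ∂μ, ∀ i, 0 ≤ E i ω :=
    ae_all_iff.2 fun i ↦ ae_nonneg_of_map_eq_expMeasure (hmeas i) (hlaw i)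
  filter_upwards [hnonneg, ae_exists_lt_sum_range hmeas hindep hlaw t] with ω hω hex
  have hmono : Monotone fun n ↦ ∑ i ∈ Finset.range n, E i ω :=
    monotone_nat_of_le_succ fun n ↦ by simp [Finset.sum_range_succ, hω n]
  exact propext (le_ncard_setOf_le_iff hmono (by simpa using ht) hex m)

end PartialSums

/-- If `(Tₙ)` are the arrival times of a Poisson process with rate 1 (i.e. the partial
sums of iid exponential(1) interarrival times `E i`), then for any `t > 0` the counting
variable `M_t = card {n ≥ 1 | T n ≤ t}` follows a Poisson distribution with parameter `t`.
(For the increasing random walk built from a continuous random variable `X`, this applies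
with `t = t_x = -log p_x`, giving `M_x ~ Poisson(-log p_x)`.) -/
theorem stmt_0 {Ω : Type*} [MeasureSpace Ω] [IsProbabilityMeasure (ℙ : Measure Ω)]
    (E : ℕ → Ω → ℝ) (hmeas : ∀ i, Measurable (E i))
    (hindep : iIndepFun E ℙ)
    (hexp : ∀ i x, 0 ≤ x → ℙ {ω | E i ω ≤ x} = ENNReal.ofReal (1 - Real.exp (-x)))
    (t : ℝ) (ht : 0 < t) (k : ℕ) :
    ℙ {ω | {n : ℕ | 1 ≤ n ∧ ∑ i ∈ Finset.range n, E i ω ≤ t}.ncard = k}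
      = ENNReal.ofReal (Real.exp (-t) * t ^ k / (Nat.factorial k)) := by
  have hlaw (i : ℕ) : Measure.map (E i) ℙ = expMeasure 1 :=
    map_eq_expMeasure one_pos (hmeas i) fun x hx ↦ by simpa using hexp i x hx
  set N : Ω → ℕ := fun ω ↦ {n : ℕ | 1 ≤ n ∧ ∑ i ∈ Finset.range n, E i ω ≤ t}.ncard
  have hevent (m : ℕ) : {ω | m ≤ N ω} =ᵐ[ℙ] {ω | ∑ i ∈ Finset.range m, E i ω ≤ t} :=
    setOf_le_ncard_ae_eq hmeas hindep hlaw ht.le m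
  have hprob (m : ℕ) : ℙ {ω | m ≤ N ω} = ENNReal.ofReal (erlangCDF m t) := by
    rw [measure_congr (hevent m), measure_sum_range_le_eq_erlangCDF hmeas hindep hlaw]
  have hnull : NullMeasurableSet {ω | k + 1 ≤ N ω} ℙ :=
    (measurableSet_le (Finset.measurable_sum _ fun i _ ↦ hmeas i) measurable_const
      ).nullMeasurableSet.congr (hevent (k + 1)).symm
  have hdiff : {ω | N ω = k} = {ω | k ≤ N ω} \ {ω | k + 1 ≤ N ω} := by
    ext ω
    simp only [mem_ofPred_eq, Set.mem_sdiff]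
    omega
  have hsub : {ω | k + 1 ≤ N ω} ⊆ {ω | k ≤ N ω} := fun ω ↦ Nat.le_of_succ_le
  rw [hdiff, measure_sdiff hsub hnull (measure_ne_top _ _), hprob, hprob,
    ← ENNReal.ofReal_sub _ (erlangCDF_nonneg _ _), erlangCDF_sub_erlangCDF_succ _ ht.le]
end

section
/- Let (M_x)_{x≥0} be the counting process of a Poisson process with intensity measure defined by x ↦ -N log p_x for a survival function p_x of a non-negative random variable with continuous cdf. Then the estimator m̂ = ∫_0^∞ (1 - 1/N)^{M_x} dx satisfies E[m̂] = ∫_0^∞ p_x dx = E[X], i.e., m̂ is unbiased. -/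
/-!
For fixed `x` with `p x > 0`, `M x` is Poisson with mean `r = -N log p x`, so its probability
generating function gives `E[t ^ M x] = exp (r (t - 1))`; at `t = 1 - 1/N` this is
`exp (log p x) = p x`. Tonelli swaps the expectation with the integral over `x`, and the
layer-cake formula identifies `∫_0^∞ P(X > x) dx` with `E[X]`.
-/

open MeasureTheory ProbabilityTheory Set
open scoped NNReal Nat

namespace ProbabilityTheory

lemma lintegral_ofReal_pow_poissonMeasure (r : ℝ≥0) {t : ℝ} (ht : 0 ≤ t) :
    ∫⁻ n, ENNReal.ofReal (t ^ n) ∂poissonMeasure r = ENNReal.ofReal (Real.exp (r * (t - 1))) := by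
  have hseries : HasSum (fun n : ℕ ↦ Real.exp (-r) * ((t * r) ^ n / n !))
      (Real.exp (r * (t - 1))) := by
    have h := (NormedSpace.expSeries_div_hasSum_exp (t * r : ℝ)).mul_left (Real.exp (-r))
    rwa [← Real.exp_eq_exp_ℝ, ← Real.exp_add, show -(r : ℝ) + t * r = r * (t - 1) by ring] at h
  simp only [poissonMeasure, lintegral_sum_measure, lintegral_smul_measure, lintegral_dirac,
    smul_eq_mul]
  rw [← hseries.tsum_eq, ENNReal.ofReal_tsum_of_nonneg (fun n ↦ by positivity) hseries.summable]
  congr 1 with n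
  rw [← ENNReal.ofReal_mul (by positivity), mul_pow]
  ring_nf

lemma hasLaw_poissonMeasure_of_measure_eq {Ω : Type*} [MeasurableSpace Ω] {μ : Measure Ω}
    {K : Ω → ℕ} (hK : Measurable K) {r : ℝ≥0}
    (hlaw : ∀ k : ℕ, μ {ω | K ω = k} = ENNReal.ofReal (Real.exp (-r) * r ^ k / k !)) :
    HasLaw K (poissonMeasure r) μ where
  map_eq := Measure.ext_of_singleton fun k ↦ by
    rw [Measure.map_apply hK (measurableSet_singleton k), poissonMeasure_singleton]
    exact hlaw k

end ProbabilityTheory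

lemma lintegral_eq_lintegral_ofReal_toReal_meas_lt {Ω : Type*} [MeasurableSpace Ω]
    (μ : Measure Ω) [IsFiniteMeasure μ] {X : Ω → ℝ} (hX0 : 0 ≤ᵐ[μ] X) (hX : AEMeasurable X μ) :
    ∫⁻ ω, ENNReal.ofReal (X ω) ∂μ = ∫⁻ x in Ioi 0, ENNReal.ofReal (μ {ω | x < X ω}).toReal := by
  rw [lintegral_eq_lintegral_meas_lt μ hX0 hX]
  exact setLIntegral_congr_fun measurableSet_Ioi fun x _ ↦
    (ENNReal.ofReal_toReal (measure_ne_top _ _)).symm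

/-- Let `X ≥ 0` have survival function `p x = P(X > x)`, and let `(M_x)` be the counting
process with `M_x ~ Poisson(-N log p_x)`. Then the ideal estimator
`m̂ = ∫_0^∞ (1-1/N)^{M_x} dx` is unbiased: `E[m̂] = ∫_0^∞ p_x dx = E[X]`. -/
theorem stmt_5 {Ω : Type*} [MeasureSpace Ω] [IsProbabilityMeasure (ℙ : Measure Ω)]
    (X : Ω → ℝ) (hX : Measurable X) (hXpos : ∀ ω, 0 ≤ X ω)
    (p : ℝ → ℝ) (hp : ∀ x, p x = (ℙ {ω | x < X ω}).toReal)
    (N : ℕ) (hN : 2 ≤ N)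
    (M : ℝ → Ω → ℕ) (hM : Measurable (fun q : ℝ × Ω => M q.1 q.2))
    (hlaw : ∀ x : ℝ, 0 < x → 0 < p x → ∀ k : ℕ,
      ℙ {ω | M x ω = k} = ENNReal.ofReal
        (Real.exp ((N:ℝ) * Real.log (p x)) * (-((N:ℝ) * Real.log (p x))) ^ k
          / (Nat.factorial k))) :
    (∫⁻ ω, (∫⁻ x in Ioi (0:ℝ),
        (if p x = 0 then 0 else ENNReal.ofReal ((1 - 1/(N:ℝ)) ^ (M x ω)))) ∂ℙ)
      = ∫⁻ x in Ioi (0:ℝ), ENNReal.ofReal (p x)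
    ∧ (∫⁻ x in Ioi (0:ℝ), ENNReal.ofReal (p x)) = ∫⁻ ω, ENNReal.ofReal (X ω) ∂ℙ := by
  have hN2 : (2 : ℝ) ≤ N := by exact_mod_cast hN
  have ht : 0 ≤ 1 - 1 / (N : ℝ) := by
    rw [sub_nonneg, div_le_one (by linarith)]
    linarith
  have hp_meas : Measurable p := by
    rw [funext hp]
    have hanti : Antitone fun x : ℝ ↦ ℙ {ω | x < X ω} := fun a b hab ↦
      measure_mono fun ω h ↦ hab.trans_lt h
    exact hanti.measurable.ennreal_toReal
  have hp_nonneg (x : ℝ) : 0 ≤ p x := hp x ▸ ENNReal.toReal_nonneg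
  have hp_le_one (x : ℝ) : p x ≤ 1 := by
    rw [hp]
    exact measureReal_le_one
  have hfiber (x : ℝ) (hx : x ∈ Ioi 0) :
      ∫⁻ ω, (if p x = 0 then 0 else ENNReal.ofReal ((1 - 1 / (N : ℝ)) ^ M x ω)) =
        ENNReal.ofReal (p x) := by
    rcases (hp_nonneg x).eq_or_lt with hpx | hpx
    · simp [← hpx]
    obtain ⟨r, hr⟩ : ∃ r : ℝ≥0, (r : ℝ) = -((N : ℝ) * Real.log (p x)) :=
      ⟨⟨_, neg_nonneg.2 (mul_nonpos_of_nonneg_of_nonpos (by positivity)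
        (Real.log_nonpos hpx.le (hp_le_one x)))⟩, rfl⟩
    have hMx : HasLaw (M x) (poissonMeasure r) := hasLaw_poissonMeasure_of_measure_eq
      (hM.comp measurable_prodMk_left) fun k ↦ by rw [hr, neg_neg]; exact hlaw x hx hpx k
    simp only [hpx.ne', if_false]
    rw [hMx.lintegral_comp (f := fun n ↦ ENNReal.ofReal _) .of_discrete,
      lintegral_ofReal_pow_poissonMeasure _ ht]
    congr 1
    rw [hr, show -((N : ℝ) * Real.log (p x)) * (1 - 1 / N - 1) = Real.log (p x) by
      field_simp; ring, Real.exp_log hpx]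
  refine ⟨?_, ?_⟩
  · rw [lintegral_lintegral_swap]
    · exact setLIntegral_congr_fun measurableSet_Ioi hfiber
    · refine (Measurable.ite ?_ measurable_const ?_).aemeasurable
      · exact measurableSet_eq_fun (hp_meas.comp measurable_snd) measurable_const
      · exact (measurable_from_nat (f := fun n ↦ ENNReal.ofReal _)).comp
          (hM.comp measurable_swap)
  · simp only [hp]
    exact (lintegral_eq_lintegral_ofReal_toReal_meas_lt ℙ (.of_forall hXpos) hX.aemeasurable).symm
end

section
/- For a non-negative random variable X with survival function p_x, for every N ≥ 2 the quantity Var(m̂) = 2∫_0^∞∫_0^x p_x p_{x'}^{1-1/N} dx' dx − E[X]^2 satisfies Var(m̂) ≤ (2/(1+1/N)) · E[X^{1+1/N}]^{2/(1+1/N)}. Consequently, if E[X^{1+ε}] < ∞ for some ε > 0, then Var(m̂) < ∞ for all N ≥ 1/ε. -/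
open MeasureTheory ProbabilityTheory Set
open scoped ENNReal

/-!
Writing `P x = P(X > x)`, Hölder's inequality on `(0, x)` gives
`∫_0^x P^{1-1/N} ≤ x^{1/N} E[X]^{1-1/N}`, so the double integral is at most
`E[X]^{1-1/N} ∫_0^∞ x^{1/N} P x dx = E[X]^{1-1/N} E[X^{1+1/N}] / (1 + 1/N)` by the layer-cake
formula. Lyapunov's inequality `E[X] ≤ E[X^{1+1/N}]^{1/(1+1/N)}` then yields the bound; applied
once more, it bounds `E[X^{1+1/N}]` by a power of `E[X^{1+ε}]` when `1/N ≤ ε`.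
-/

section Holder

variable {α : Type*} [MeasurableSpace α] {μ : Measure α} {f : α → ℝ≥0∞}

theorem lintegral_rpow_le_rpow_lintegral_mul_measure_univ (hf : AEMeasurable f μ) {r : ℝ}
    (hr₀ : 0 ≤ r) (hr₁ : r ≤ 1) :
    ∫⁻ a, f a ^ r ∂μ ≤ (∫⁻ a, f a ∂μ) ^ r * μ univ ^ (1 - r) := by
  simpa using ENNReal.lintegral_mul_norm_pow_le (g := fun _ => 1) hf aemeasurable_const hr₀
    (sub_nonneg.2 hr₁) (add_sub_cancel r 1)

theorem lintegral_rpow_le_lintegral_rpow_rpow_div [IsProbabilityMeasure μ]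
    (hf : AEMeasurable f μ) {p q : ℝ} (hp : 0 ≤ p) (hpq : p ≤ q) (hq : 0 < q) :
    ∫⁻ a, f a ^ p ∂μ ≤ (∫⁻ a, f a ^ q ∂μ) ^ (p / q) := by
  have h := lintegral_rpow_le_rpow_lintegral_mul_measure_univ (hf.pow_const q)
    (div_nonneg hp hq.le) ((div_le_one hq).2 hpq)
  simpa [← ENNReal.rpow_mul, mul_div_cancel₀ p hq.ne'] using h

end Holder

section Tail

variable {Ω : Type*} [MeasurableSpace Ω] {μ : Measure Ω} {X : Ω → ℝ}

theorem measurable_measure_lt : Measurable fun t : ℝ => μ {ω | t < X ω} :=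
  Antitone.measurable fun _ _ hab => measure_mono fun _ hω => lt_of_le_of_lt hab hω

theorem lintegral_ofReal_rpow_eq_mul_lintegral_meas_lt (hX : AEMeasurable X μ)
    (hXnn : 0 ≤ᵐ[μ] X) {p : ℝ} (hp : 0 < p) :
    ∫⁻ ω, ENNReal.ofReal (X ω) ^ p ∂μ =
      ENNReal.ofReal p * ∫⁻ t in Ioi 0, μ {ω | t < X ω} * ENNReal.ofReal t ^ (p - 1) := by
  calc ∫⁻ ω, ENNReal.ofReal (X ω) ^ p ∂μ = ∫⁻ ω, ENNReal.ofReal (X ω ^ p) ∂μ := by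
        refine lintegral_congr_ae ?_
        filter_upwards [hXnn] with ω hω
        exact ENNReal.ofReal_rpow_of_nonneg hω hp.le
    _ = _ := by
        rw [lintegral_rpow_eq_lintegral_meas_lt_mul μ hXnn hX hp]
        congr 1
        refine setLIntegral_congr_fun measurableSet_Ioi fun t ht => ?_
        rw [ENNReal.ofReal_rpow_of_pos ht]

theorem lintegral_Ioo_meas_lt_rpow_le (hX : AEMeasurable X μ)
    (hXnn : 0 ≤ᵐ[μ] X) {s : ℝ} (hs₀ : 0 ≤ s) (hs₁ : s ≤ 1) (x : ℝ) :
    ∫⁻ y in Ioo 0 x, μ {ω | y < X ω} ^ (1 - s) ≤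
      (∫⁻ ω, ENNReal.ofReal (X ω) ∂μ) ^ (1 - s) * ENNReal.ofReal x ^ s := by
  have h := lintegral_rpow_le_rpow_lintegral_mul_measure_univ
    (μ := volume.restrict (Ioo 0 x)) (measurable_measure_lt (μ := μ) (X := X)).aemeasurable
    (sub_nonneg.2 hs₁) (sub_le_self 1 hs₀)
  rw [Measure.restrict_apply_univ, Real.volume_Ioo, sub_zero, sub_sub_cancel] at h
  refine h.trans ?_
  gcongr
  rw [lintegral_eq_lintegral_meas_lt μ hXnn hX]
  exact lintegral_mono_set Ioo_subset_Ioi_self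

theorem two_mul_lintegral_Ioi_lintegral_Ioo_meas_lt_mul_rpow_le [IsProbabilityMeasure μ]
    (hX : AEMeasurable X μ) (hXnn : 0 ≤ᵐ[μ] X) {s : ℝ} (hs₀ : 0 ≤ s) (hs₁ : s ≤ 1) :
    2 * ∫⁻ x in Ioi 0, ∫⁻ y in Ioo 0 x, μ {ω | x < X ω} * μ {ω | y < X ω} ^ (1 - s) ≤
      ENNReal.ofReal (2 / (1 + s)) *
        (∫⁻ ω, ENNReal.ofReal (X ω) ^ (1 + s) ∂μ) ^ (2 / (1 + s)) := by
  set M := ∫⁻ ω, ENNReal.ofReal (X ω) ^ (1 + s) ∂μ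
  set E := ∫⁻ ω, ENNReal.ofReal (X ω) ∂μ
  have hq : 0 < 1 + s := by linarith
  have hE : E ≤ M ^ (1 / (1 + s)) := by
    simpa using lintegral_rpow_le_lintegral_rpow_rpow_div hX.ennreal_ofReal zero_le_one
      (by linarith) hq
  have hM : M = ENNReal.ofReal (1 + s) *
      ∫⁻ t in Ioi 0, μ {ω | t < X ω} * ENNReal.ofReal t ^ s := by
    simpa using lintegral_ofReal_rpow_eq_mul_lintegral_meas_lt hX hXnn hq
  have hmeas : Measurable fun t : ℝ => μ {ω | t < X ω} * ENNReal.ofReal t ^ s :=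
    measurable_measure_lt.mul (by fun_prop)
  rw [ENNReal.ofReal_div_of_pos hq, ENNReal.ofReal_ofNat, div_eq_mul_inv, mul_assoc]
  gcongr 2 * ?_
  calc ∫⁻ x in Ioi 0, ∫⁻ y in Ioo 0 x, μ {ω | x < X ω} * μ {ω | y < X ω} ^ (1 - s)
      = ∫⁻ x in Ioi 0, μ {ω | x < X ω} * ∫⁻ y in Ioo 0 x, μ {ω | y < X ω} ^ (1 - s) :=
        lintegral_congr fun x => lintegral_const_mul' _ _ (measure_ne_top μ _)
    _ ≤ ∫⁻ x in Ioi 0, E ^ (1 - s) * (μ {ω | x < X ω} * ENNReal.ofReal x ^ s) :=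
        lintegral_mono fun x => by
          rw [mul_left_comm]
          gcongr
          exact lintegral_Ioo_meas_lt_rpow_le hX hXnn hs₀ hs₁ x
    _ = E ^ (1 - s) * ((ENNReal.ofReal (1 + s))⁻¹ * M) := by
        rw [lintegral_const_mul _ hmeas, hM,
          ← mul_assoc (ENNReal.ofReal (1 + s))⁻¹,
          ENNReal.inv_mul_cancel (by positivity) ENNReal.ofReal_ne_top, one_mul]
    _ ≤ (M ^ (1 / (1 + s))) ^ (1 - s) * ((ENNReal.ofReal (1 + s))⁻¹ * M) := by gcongr
    _ = (ENNReal.ofReal (1 + s))⁻¹ * M ^ (1 / (1 + s) * (1 - s) + 1) := by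
        rw [← ENNReal.rpow_mul, ENNReal.rpow_add_of_nonneg _ _ (by positivity) zero_le_one,
          ENNReal.rpow_one]
        ring
    _ = (ENNReal.ofReal (1 + s))⁻¹ * M ^ (2 / (1 + s)) := by
        congr 2
        field_simp
        ring

end Tail

/-- For a non-negative random variable `X` with survival function `p x = P(X > x)` and
`N ≥ 2`, the variance `Var(m̂) = 2∫_0^∞∫_0^x p_x p_{x'}^{1-1/N} dx' dx − E[X]²` satisfies
`Var(m̂) ≤ (2/(1+1/N)) · E[X^{1+1/N}]^{2/(1+1/N)}`. Consequently, if `E[X^{1+ε}] < ∞` for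
some `ε > 0`, then `Var(m̂) < ∞` for all `N ≥ 1/ε`. -/
theorem stmt_7 {Ω : Type*} [MeasureSpace Ω] [IsProbabilityMeasure (ℙ : Measure Ω)]
    (X : Ω → ℝ) (hX : Measurable X) (hXpos : ∀ ω, 0 ≤ X ω)
    (p : ℝ → ℝ) (hp : ∀ x, p x = (ℙ {ω | x < X ω}).toReal)
    (N : ℕ) (hN : 2 ≤ N) :
    (2 * (∫⁻ x in Ioi (0:ℝ), ∫⁻ y in Ioo (0:ℝ) x,
          ENNReal.ofReal (p x * p y ^ (1 - 1/(N:ℝ))))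
        - (∫⁻ x in Ioi (0:ℝ), ENNReal.ofReal (p x)) ^ 2
      ≤ ENNReal.ofReal (2/(1 + 1/(N:ℝ)))
          * (∫⁻ ω, (ENNReal.ofReal (X ω)) ^ ((1 + 1/(N:ℝ)) : ℝ) ∂ℙ)
              ^ ((2/(1 + 1/(N:ℝ))) : ℝ)) ∧
    (∀ ε : ℝ, 0 < ε → (∫⁻ ω, (ENNReal.ofReal (X ω)) ^ ((1 + ε) : ℝ) ∂ℙ) ≠ ⊤ →
      1/ε ≤ (N:ℝ) →
      2 * (∫⁻ x in Ioi (0:ℝ), ∫⁻ y in Ioo (0:ℝ) x,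
            ENNReal.ofReal (p x * p y ^ (1 - 1/(N:ℝ))))
          - (∫⁻ x in Ioi (0:ℝ), ENNReal.ofReal (p x)) ^ 2 < ⊤) := by
  have hXnn : 0 ≤ᵐ[ℙ] X := Filter.Eventually.of_forall hXpos
  have hN₀ : (0 : ℝ) < N := by exact_mod_cast (by omega : 0 < N)
  have hs₁ : 1 / (N : ℝ) ≤ 1 := (div_le_one hN₀).2 (by exact_mod_cast (by omega : 1 ≤ N))
  have hp_eq : ∀ x, ENNReal.ofReal (p x) = ℙ {ω | x < X ω} := fun x => by
    rw [hp, ENNReal.ofReal_toReal (measure_ne_top _ _)]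
  have hintegrand : ∀ x y, ENNReal.ofReal (p x * p y ^ (1 - 1 / (N : ℝ))) =
      ℙ {ω | x < X ω} * ℙ {ω | y < X ω} ^ (1 - 1 / (N : ℝ)) := fun x y => by
    rw [ENNReal.ofReal_mul (by rw [hp]; positivity), hp_eq,
      ← ENNReal.ofReal_rpow_of_nonneg (by rw [hp]; positivity) (sub_nonneg.2 hs₁), hp_eq]
  simp only [hintegrand]
  have hvar := (tsub_le_self (b := (∫⁻ x in Ioi 0, ENNReal.ofReal (p x)) ^ 2)).trans
    (two_mul_lintegral_Ioi_lintegral_Ioo_meas_lt_mul_rpow_le hX.aemeasurable hXnn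
      (by positivity) hs₁)
  refine ⟨hvar, fun ε hε hmoment hNε => hvar.trans_lt <|
    ENNReal.mul_lt_top ENNReal.ofReal_lt_top <| ENNReal.rpow_lt_top_of_nonneg (by positivity) ?_⟩
  have hsε : 1 / (N : ℝ) ≤ ε := (one_div_le hε hN₀).1 hNε
  exact ((lintegral_rpow_le_lintegral_rpow_rpow_div hX.ennreal_ofReal.aemeasurable
    (by positivity) (by linarith) (by linarith)).trans_lt
    (ENNReal.rpow_lt_top_of_nonneg (by positivity) hmoment)).ne
end

section
/- For every N ≥ 2, 2∫_0^∞∫_0^x p_x p_{x'}^{1-1/N} dx' dx − E[X]^2 ≤ (1/N)(2∫_0^∞ x p_x dx − E[X]^2), i.e., N·Var(m̂) + E[X]^2 ≤ N·Var(m̂_MC) + E[X]^2 where m̂_MC is the Monte Carlo mean of N iid copies of X. Hence Var(m̂) ≤ Var(m̂_MC). -/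
open MeasureTheory Set
open scoped ENNReal

/-!
Write `q = p` and `r = 1 - p` (so `q + r = 1`), and let `T(f, g) = ∫∫_{0<y<x} f(x) g(y)`.
By symmetry of the square `(0,∞)²` about its diagonal, `E[X]² = 2 T(q, q)`, while
`E[X²]/2 = ∫ x q(x) = T(q, q + r) = T(q, q) + T(q, r)`. The weighted AM-GM inequality
`p^(1-1/N) ≤ p + (1 - p)/N` bounds the left-hand integral by `T(q, q) + T(q, r)/N`, and after
subtracting `2 T(q, q)` from both sides this is the claim.
-/

namespace MeasureTheory

variable {μ : Measure ℝ}

noncomputable def lowerTriangleLIntegral (μ : Measure ℝ) (a : ℝ) (q r : ℝ → ℝ≥0∞) :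
    ℝ≥0∞ :=
  ∫⁻ x in Ioi a, q x * ∫⁻ y in Ioo a x, r y ∂μ ∂μ

theorem measurable_setLIntegral_Ioo (a : ℝ) (r : ℝ → ℝ≥0∞) :
    Measurable fun x => ∫⁻ y in Ioo a x, r y ∂μ :=
  Monotone.measurable fun _ _ hxy => lintegral_mono_set (Ioo_subset_Ioo_right hxy)

theorem lintegral_Ioi_lintegral_Ioi_swap [SFinite μ] {F : ℝ → ℝ → ℝ≥0∞}
    (hF : Measurable (Function.uncurry F)) (a : ℝ) :
    ∫⁻ x in Ioi a, ∫⁻ y in Ioi x, F x y ∂μ ∂μ = ∫⁻ y in Ioi a, ∫⁻ x in Ioo a y, F x y ∂μ ∂μ := by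
  let G : ℝ → ℝ → ℝ≥0∞ := fun x y =>
    {z : ℝ × ℝ | z.1 < z.2}.indicator (Function.uncurry F) (x, y)
  have hG : Measurable (Function.uncurry G) :=
    hF.indicator (measurableSet_lt measurable_fst measurable_snd)
  calc ∫⁻ x in Ioi a, ∫⁻ y in Ioi x, F x y ∂μ ∂μ
      = ∫⁻ x in Ioi a, ∫⁻ y in Ioi a, G x y ∂μ ∂μ := by
        refine setLIntegral_congr_fun measurableSet_Ioi fun x hx => ?_
        have hGx : G x = (Ioi x).indicator (F x) := by
          ext y; simp [G, indicator_apply]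
        rw [hGx, lintegral_indicator measurableSet_Ioi, Measure.restrict_restrict measurableSet_Ioi,
          inter_eq_left.2 (Ioi_subset_Ioi (le_of_lt hx))]
    _ = ∫⁻ y in Ioi a, ∫⁻ x in Ioi a, G x y ∂μ ∂μ :=
        lintegral_lintegral_swap hG.aemeasurable
    _ = ∫⁻ y in Ioi a, ∫⁻ x in Ioo a y, F x y ∂μ ∂μ := by
        refine setLIntegral_congr_fun measurableSet_Ioi fun y _ => ?_
        have hGy : (fun x => G x y) = (Iio y).indicator (fun x => F x y) := by
          ext x; simp [G, indicator_apply]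
        rw [hGy, lintegral_indicator measurableSet_Iio, Measure.restrict_restrict measurableSet_Iio,
          inter_comm, Ioi_inter_Iio]

theorem sq_setLIntegral_Ioi [SFinite μ] [NullSingletonClass μ] {q : ℝ → ℝ≥0∞} (hq : Measurable q)
    (a : ℝ) :
    (∫⁻ x in Ioi a, q x ∂μ) ^ 2 = 2 * lowerTriangleLIntegral μ a q q := by
  have hsplit : ∀ x ∈ Ioi a,
      ∫⁻ y in Ioi a, q y ∂μ = (∫⁻ y in Ioo a x, q y ∂μ) + ∫⁻ y in Ioi x, q y ∂μ := fun x hx => by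
    rw [← Ioo_union_Ici_eq_Ioi hx, lintegral_union measurableSet_Ici
      (disjoint_left.2 fun y hy hy' => lt_irrefl y (hy.2.trans_le hy')),
      setLIntegral_congr Ioi_ae_eq_Ici]
  have hswap :
      ∫⁻ x in Ioi a, q x * ∫⁻ y in Ioi x, q y ∂μ ∂μ = lowerTriangleLIntegral μ a q q := by
    calc ∫⁻ x in Ioi a, q x * ∫⁻ y in Ioi x, q y ∂μ ∂μ
        = ∫⁻ x in Ioi a, ∫⁻ y in Ioi x, q x * q y ∂μ ∂μ := by
          simp_rw [lintegral_const_mul _ hq]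
      _ = ∫⁻ y in Ioi a, ∫⁻ x in Ioo a y, q x * q y ∂μ ∂μ :=
          lintegral_Ioi_lintegral_Ioi_swap (F := fun x y => q x * q y)
            ((hq.comp measurable_fst).mul (hq.comp measurable_snd)) a
      _ = lowerTriangleLIntegral μ a q q := by
          simp_rw [lintegral_mul_const _ hq, mul_comm]; rfl
  calc (∫⁻ x in Ioi a, q x ∂μ) ^ 2
      = ∫⁻ x in Ioi a, q x * ∫⁻ y in Ioi a, q y ∂μ ∂μ := by rw [sq, lintegral_mul_const _ hq]
    _ = ∫⁻ x in Ioi a, (q x * (∫⁻ y in Ioo a x, q y ∂μ) + q x * ∫⁻ y in Ioi x, q y ∂μ) ∂μ :=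
        setLIntegral_congr_fun measurableSet_Ioi fun x hx => by rw [hsplit x hx, mul_add]
    _ = lowerTriangleLIntegral μ a q q + ∫⁻ x in Ioi a, q x * ∫⁻ y in Ioi x, q y ∂μ ∂μ :=
        lintegral_add_left (hq.mul (measurable_setLIntegral_Ioo a q)) _
    _ = 2 * lowerTriangleLIntegral μ a q q := by rw [hswap, two_mul]

theorem lowerTriangleLIntegral_add_right {a : ℝ} {q r s : ℝ → ℝ≥0∞} (hq : Measurable q)
    (hr : Measurable r) :
    lowerTriangleLIntegral μ a q (r + s) =
      lowerTriangleLIntegral μ a q r + lowerTriangleLIntegral μ a q s := by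
  simp only [lowerTriangleLIntegral, Pi.add_apply]
  simp_rw [lintegral_add_left hr, mul_add]
  exact lintegral_add_left (hq.mul (measurable_setLIntegral_Ioo a r)) _

theorem lowerTriangleLIntegral_mul_const_right {a : ℝ} {q r : ℝ → ℝ≥0∞} (hq : Measurable q)
    (hr : Measurable r) (c : ℝ≥0∞) :
    lowerTriangleLIntegral μ a q (fun y => r y * c) = lowerTriangleLIntegral μ a q r * c := by
  simp only [lowerTriangleLIntegral]
  simp_rw [lintegral_mul_const _ hr, ← mul_assoc]
  exact lintegral_mul_const _ (hq.mul (measurable_setLIntegral_Ioo a r))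

theorem lowerTriangleLIntegral_one_right (a : ℝ) (q : ℝ → ℝ≥0∞) :
    lowerTriangleLIntegral μ a q 1 = ∫⁻ x in Ioi a, q x * μ (Ioo a x) ∂μ := by
  simp only [lowerTriangleLIntegral, Pi.one_apply, setLIntegral_one]

end MeasureTheory

/-- For `t = 1/N` and `0 < b ≤ 1` this is `b [N (b^(-1/N) - 1) + 1] ≤ 1`. -/
theorem Real.rpow_one_sub_le_add_mul_one_sub {b t : ℝ} (hb : 0 ≤ b) (ht0 : 0 ≤ t) (ht1 : t ≤ 1) :
    b ^ (1 - t) ≤ b + t * (1 - b) := by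
  have h := Real.geom_mean_le_arith_mean2_weighted (sub_nonneg.2 ht1) ht0 hb zero_le_one
    (sub_add_cancel 1 t)
  rw [Real.one_rpow, mul_one] at h
  linarith

theorem ENNReal.ofReal_rpow_one_sub_le {b t : ℝ} (hb0 : 0 ≤ b) (hb1 : b ≤ 1) (ht0 : 0 ≤ t)
    (ht1 : t ≤ 1) :
    ENNReal.ofReal (b ^ (1 - t)) ≤
      ENNReal.ofReal b + ENNReal.ofReal (1 - b) * ENNReal.ofReal t := by
  rw [← ENNReal.ofReal_mul (sub_nonneg.2 hb1), ← ENNReal.ofReal_add hb0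
    (mul_nonneg (sub_nonneg.2 hb1) ht0), mul_comm (1 - b)]
  exact ENNReal.ofReal_le_ofReal (Real.rpow_one_sub_le_add_mul_one_sub hb0 ht0 ht1)

theorem ENNReal.mul_sub_le_of_le_add_div {A B D c n : ℝ≥0∞} (hA : A ≤ B + D / n) :
    c * A - c * B ≤ (c * (B + D) - c * B) / n := by
  rcases eq_or_ne (c * B) ⊤ with hcB | hcB
  · simp [hcB]
  rw [mul_add, ENNReal.add_sub_cancel_left hcB, tsub_le_iff_right]
  calc c * A ≤ c * (B + D / n) := mul_le_mul_right hA c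
    _ = c * D / n + c * B := by rw [mul_add, add_comm, mul_div_assoc]

/-- For every `N ≥ 2`, `2∫_0^∞∫_0^x p_x p_{x'}^{1-1/N} dx' dx − E[X]²
≤ (1/N)(2∫_0^∞ x p_x dx − E[X]²)`, where `E[X] = ∫_0^∞ p_x dx` and
`E[X²] = 2∫_0^∞ x p_x dx`: that is, `Var(m̂) ≤ Var(m̂_MC)`, the variance of the
Monte Carlo mean of `N` iid copies of `X`. -/
theorem stmt_8 (p : ℝ → ℝ) (hp0 : ∀ x, 0 ≤ p x) (hp1 : ∀ x, p x ≤ 1) (hmono : Antitone p)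
    (N : ℕ) (hN : 2 ≤ N) :
    2 * (∫⁻ x in Ioi (0:ℝ), ∫⁻ y in Ioo (0:ℝ) x,
          ENNReal.ofReal (p x * p y ^ (1 - 1/(N:ℝ))))
        - (∫⁻ x in Ioi (0:ℝ), ENNReal.ofReal (p x)) ^ 2
      ≤ (2 * (∫⁻ x in Ioi (0:ℝ), ENNReal.ofReal x * ENNReal.ofReal (p x))
          - (∫⁻ x in Ioi (0:ℝ), ENNReal.ofReal (p x)) ^ 2) / (N : ℝ≥0∞) := by
  have hq : Measurable fun x => ENNReal.ofReal (p x) := hmono.measurable.ennreal_ofReal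
  have hr : Measurable fun x => ENNReal.ofReal (1 - p x) :=
    (measurable_const.sub hmono.measurable).ennreal_ofReal
  set T := lowerTriangleLIntegral volume 0 (fun x => ENNReal.ofReal (p x))
  have hsecond : ∫⁻ x in Ioi (0:ℝ), ENNReal.ofReal x * ENNReal.ofReal (p x) =
      T (fun x => ENNReal.ofReal (p x)) + T (fun x => ENNReal.ofReal (1 - p x)) := by
    have hqr : ((fun x => ENNReal.ofReal (p x)) + fun x => ENNReal.ofReal (1 - p x)) = 1 :=
      funext fun x => by
        rw [Pi.add_apply, ← ENNReal.ofReal_add (hp0 x) (sub_nonneg.2 (hp1 x)), add_sub_cancel,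
          ENNReal.ofReal_one, Pi.one_apply]
    simp only [T]
    rw [← lowerTriangleLIntegral_add_right hq hq, hqr, lowerTriangleLIntegral_one_right]
    refine setLIntegral_congr_fun measurableSet_Ioi fun x _ => ?_
    rw [Real.volume_Ioo, sub_zero, mul_comm]
  have hN0 : (0:ℝ) < N := by positivity
  have ht1 : 1 / (N:ℝ) ≤ 1 := (div_le_one hN0).2 (by exact_mod_cast (by omega : 1 ≤ N))
  have hfirst : ∫⁻ x in Ioi (0:ℝ), ∫⁻ y in Ioo (0:ℝ) x,
        ENNReal.ofReal (p x * p y ^ (1 - 1/(N:ℝ))) ≤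
      T (fun x => ENNReal.ofReal (p x)) + T (fun x => ENNReal.ofReal (1 - p x)) / N := by
    calc _ ≤ T ((fun y => ENNReal.ofReal (p y)) +
            fun y => ENNReal.ofReal (1 - p y) * ENNReal.ofReal (1 / N)) := by
          refine lintegral_mono fun x => ?_
          rw [← lintegral_const_mul _ (hq.add (hr.mul_const _))]
          refine lintegral_mono fun y => ?_
          rw [ENNReal.ofReal_mul (hp0 x)]
          gcongr
          exact ENNReal.ofReal_rpow_one_sub_le (hp0 y) (hp1 y) (by positivity) ht1
      _ = _ := by
          simp only [T]
          rw [lowerTriangleLIntegral_add_right hq hq, lowerTriangleLIntegral_mul_const_right hq hr,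
            ENNReal.ofReal_div_of_pos hN0, ENNReal.ofReal_one, ENNReal.ofReal_natCast, mul_one_div]
  rw [sq_setLIntegral_Ioi hq, hsecond]
  exact ENNReal.mul_sub_le_of_le_add_div hfirst
end

section
/- Let (m̂_n) be a sequence of random variables converging to m̂ with E[m̂] = m, and let T be a nonnegative integer-valued random variable independent of (m̂_n) with β_n = P(T ≥ n) > 0 for all n. If the sum Σ_n (m̂_{n+1} − m̂_n)·1_{T≥n}/β_n converges absolutely in L^1, then the randomised estimator Ẑ = Σ_{n=0}^T (m̂_{n+1} − m̂_n)/β_n satisfies E[Ẑ] = m. -/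
/-! Write `Ẑ = ∑' n, 1_{T ≥ n} Δₙ / βₙ` with `Δₙ = m̂ₙ₊₁ - m̂ₙ`. Independence of `T` and `Δₙ` gives
`E[1_{T ≥ n} Δₙ / βₙ] = E[Δₙ]` and `E|1_{T ≥ n} Δₙ / βₙ| = E|Δₙ|`, so the `L¹` hypothesis says
`∑ E|Δₙ| < ∞`. This justifies exchanging expectation and summation twice:
`E[Ẑ] = ∑ E[Δₙ] = E[∑ Δₙ] = E[m̂]`, where the last series telescopes to the a.e. limit `m̂`
because `m̂₀ = 0`. -/

open MeasureTheory ProbabilityTheory Filter Finset Topology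
open scoped ENNReal

namespace MeasureTheory

variable {α E : Type*} {_ : MeasurableSpace α} {μ : Measure α}
  [NormedAddCommGroup E] [NormedSpace ℝ E] [CompleteSpace E]

theorem tsum_integral_sub_eq_integral_of_tendsto {f : ℕ → α → E} {g : α → E}
    (hf : ∀ n, AEStronglyMeasurable (f n) μ) (h0 : f 0 = 0)
    (hlim : ∀ᵐ a ∂μ, Tendsto (fun n ↦ f n a) atTop (𝓝 (g a)))
    (hsum : ∑' n, ∫⁻ a, ‖f (n + 1) a - f n a‖ₑ ∂μ ≠ ∞) :
    ∑' n, ∫ a, f (n + 1) a - f n a ∂μ = ∫ a, g a ∂μ := by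
  have hΔ n : AEStronglyMeasurable (fun a ↦ f (n + 1) a - f n a) μ := (hf (n + 1)).sub (hf n)
  rw [← integral_tsum hΔ hsum]
  refine integral_congr_ae ?_
  have hsummable := summable_norm_of_tsum_eLpNorm_ne_top le_rfl hΔ
    (by simpa only [eLpNorm_one_eq_lintegral_enorm] using hsum)
  filter_upwards [hlim, hsummable] with a hlim_a hsummable_a
  refine tendsto_nhds_unique ?_ hlim_a
  refine (Summable.of_norm hsummable_a).hasSum.tendsto_sum_nat.congr fun N ↦ ?_
  simp [sum_range_sub (fun n ↦ f n a), h0]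

end MeasureTheory

namespace ProbabilityTheory

variable {Ω 𝓧 : Type*} {m mΩ : MeasurableSpace Ω} {P : Measure Ω} [m𝓧 : MeasurableSpace 𝓧]
  {X : Ω → 𝓧} {A : Set Ω}

theorem Indep.setLIntegral_eq_mul (hm : m ≤ mΩ) {f : 𝓧 → ℝ≥0∞}
    (hA1 : Indep m (m𝓧.comap X) P) (hX : Measurable X) (hA : MeasurableSet[m] A)
    (hf : Measurable f) :
    ∫⁻ ω in A, f (X ω) ∂P = P A * ∫⁻ ω, f (X ω) ∂P := by
  have h_ind : IndepSets {s | MeasurableSet[m𝓧.comap X] s} {A} P :=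
    indepSets_of_indepSets_of_le_right hA1.symm (Set.singleton_subset_iff.2 hA)
  have hmul := lintegral_mul_indicator_eq_lintegral_mul_lintegral_indicator (f := fun ω ↦ f (X ω))
    hX.comap_le 1 (hm A hA) h_ind (hf.comp (Measurable.of_comap_le le_rfl))
  rw [lintegral_indicator_const (hm A hA), one_mul] at hmul
  rw [← lintegral_indicator (hm A hA), mul_comm, ← hmul]
  congr with ω
  by_cases hω : ω ∈ A <;> simp [hω]

section

variable {ι : Type*} [MeasurableSpace ι] {T : Ω → ι} {S : Set ι} [IsFiniteMeasure P]

theorem IndepFun.setLIntegral_enorm_div_measureReal {Y : Ω → ℝ} (hTY : IndepFun T Y P)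
    (hT : Measurable T) (hY : Measurable Y) (hS : MeasurableSet S) (hS0 : P (T ⁻¹' S) ≠ 0) :
    ∫⁻ ω in T ⁻¹' S, ‖Y ω / P.real (T ⁻¹' S)‖ₑ ∂P = ∫⁻ ω, ‖Y ω‖ₑ ∂P := by
  have hPS : ‖P.real (T ⁻¹' S)‖ₑ = P (T ⁻¹' S) := by
    rw [Real.enorm_of_nonneg measureReal_nonneg, ofReal_measureReal]
  simp only [div_eq_mul_inv, enorm_mul, enorm_inv ((measureReal_ne_zero_iff).2 hS0), hPS]
  rw [lintegral_mul_const' _ _ (ENNReal.inv_ne_top.2 hS0),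
    ((IndepFun_iff_Indep _ _ _).1 hTY).setLIntegral_eq_mul hT.comap_le hY ⟨S, hS, rfl⟩
      measurable_enorm,
    mul_right_comm, ENNReal.mul_inv_cancel hS0 (measure_ne_top _ _), one_mul]

theorem IndepFun.setIntegral_div_measureReal {Y : Ω → ℝ} (hTY : IndepFun T Y P)
    (hT : Measurable T) (hY : AEMeasurable Y P) (hS : MeasurableSet S) (hS0 : P (T ⁻¹' S) ≠ 0) :
    ∫ ω in T ⁻¹' S, Y ω / P.real (T ⁻¹' S) ∂P = ∫ ω, Y ω ∂P := by
  rw [integral_div, show ∫ ω in T ⁻¹' S, Y ω ∂P = P.real (T ⁻¹' S) * ∫ ω, Y ω ∂P from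
    ((IndepFun_iff_Indep _ _ _).1 hTY).setIntegral_eq_mul hT.comap_le hY ⟨S, hS, rfl⟩
      aestronglyMeasurable_id]
  exact mul_div_cancel_left₀ _ ((measureReal_ne_zero_iff).2 hS0)

end

theorem integral_sum_range_div_measureReal_eq_tsum_integral [IsFiniteMeasure P] {T : Ω → ℕ}
    {Δ : ℕ → Ω → ℝ} (hT : Measurable T) (hΔ : ∀ n, Measurable (Δ n))
    (hindep : ∀ n, IndepFun T (Δ n) P) (hpos : ∀ n, P {ω | n ≤ T ω} ≠ 0)
    (hsum : ∑' n, ∫⁻ ω, ‖Δ n ω‖ₑ ∂P ≠ ∞) :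
    ∫ ω, ∑ n ∈ range (T ω + 1), Δ n ω / P.real {ω | n ≤ T ω} ∂P = ∑' n, ∫ ω, Δ n ω ∂P := by
  set A : ℕ → Set Ω := fun n ↦ {ω | n ≤ T ω}
  have hA n : MeasurableSet (A n) := hT measurableSet_Ici
  set Z : ℕ → Ω → ℝ := fun n ↦ (A n).indicator fun ω ↦ Δ n ω / P.real (A n)
  have hZ_sum ω : ∑' n, Z n ω = ∑ n ∈ range (T ω + 1), Δ n ω / P.real (A n) := by
    rw [tsum_eq_sum (s := range (T ω + 1))]
    · exact sum_congr rfl fun n hn ↦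
        Set.indicator_of_mem (show ω ∈ A n from Nat.lt_succ_iff.1 (mem_range.1 hn)) _
    · exact fun n hn ↦
        Set.indicator_of_notMem (fun h : ω ∈ A n ↦ hn (mem_range.2 (Nat.lt_succ_of_le h))) _
  have hZ_enorm n : ∫⁻ ω, ‖Z n ω‖ₑ ∂P = ∫⁻ ω, ‖Δ n ω‖ₑ ∂P := by
    simp only [Z, enorm_indicator_eq_indicator_enorm]
    rw [lintegral_indicator (hA n)]
    exact (hindep n).setLIntegral_enorm_div_measureReal hT (hΔ n) measurableSet_Ici (hpos n)
  have hZ_integral n : ∫ ω, Z n ω ∂P = ∫ ω, Δ n ω ∂P := by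
    rw [integral_indicator (hA n)]
    exact (hindep n).setIntegral_div_measureReal hT (hΔ n).aemeasurable measurableSet_Ici (hpos n)
  have hZ_meas n : AEStronglyMeasurable (Z n) P :=
    (((hΔ n).div_const _).indicator (hA n)).aestronglyMeasurable
  calc _ = ∫ ω, ∑' n, Z n ω ∂P := (integral_congr_ae (ae_of_all _ hZ_sum)).symm
    _ = ∑' n, ∫ ω, Z n ω ∂P := integral_tsum hZ_meas (by simpa only [hZ_enorm] using hsum)
    _ = ∑' n, ∫ ω, Δ n ω ∂P := tsum_congr hZ_integral

end ProbabilityTheory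

theorem stmt_10_general {Ω : Type*} [MeasureSpace Ω] [IsProbabilityMeasure (ℙ : Measure Ω)]
    (mh : ℕ → Ω → ℝ) (hmeas : ∀ n, Measurable (mh n)) (h0 : mh 0 = fun _ => 0)
    (mlim : Ω → ℝ)
    (hconv : ∀ᵐ ω ∂ℙ, Filter.Tendsto (fun n => mh n ω) Filter.atTop (nhds (mlim ω)))
    (T : Ω → ℕ) (hT : Measurable T)
    (β : ℕ → ℝ) (hβ : ∀ n, β n = (ℙ {ω | n ≤ T ω}).toReal) (hβpos : ∀ n, 0 < β n)
    (hindep : IndepFun T (fun ω => fun n => mh n ω) ℙ)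
    (hL1 : ∑' n : ℕ,
        (∫⁻ ω in {ω | n ≤ T ω}, ENNReal.ofReal (|mh (n+1) ω - mh n ω| / β n) ∂ℙ) ≠ ⊤) :
    ∫ ω, (∑ n ∈ Finset.range (T ω + 1), (mh (n+1) ω - mh n ω) / β n) ∂ℙ
      = ∫ ω, mlim ω ∂ℙ := by
  simp only [hβ, ← measureReal_def] at hβpos hL1 ⊢
  have hΔ n : Measurable fun ω ↦ mh (n + 1) ω - mh n ω := (hmeas (n + 1)).sub (hmeas n)
  have hindepΔ n : IndepFun T (fun ω ↦ mh (n + 1) ω - mh n ω) ℙ :=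
    hindep.comp measurable_id ((measurable_pi_apply (n + 1)).sub (measurable_pi_apply n))
  have hpos n : ℙ {ω | n ≤ T ω} ≠ 0 := (measureReal_ne_zero_iff).1 (hβpos n).ne'
  have hsum : ∑' n, ∫⁻ ω, ‖mh (n + 1) ω - mh n ω‖ₑ ∂ℙ ≠ ∞ := by
    refine ne_of_eq_of_ne (tsum_congr fun n ↦ ?_) hL1
    rw [← (hindepΔ n).setLIntegral_enorm_div_measureReal hT (hΔ n) measurableSet_Ici (hpos n)]
    refine lintegral_congr fun ω ↦ ?_
    rw [Real.enorm_eq_ofReal_abs, abs_div, abs_of_nonneg measureReal_nonneg]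
    rfl
  rw [integral_sum_range_div_measureReal_eq_tsum_integral hT hΔ hindepΔ hpos hsum]
  exact tsum_integral_sub_eq_integral_of_tendsto (fun n ↦ (hmeas n).aestronglyMeasurable) h0
    hconv hsum

/-- Debiasing via random truncation (Rhee–Glynn / McLeish): let `(m̂_n)` (with `m̂_0 = 0`)
converge a.e. to an integrable `m̂` with `E[m̂] = m`, and let `T` be a nonnegative
integer-valued random variable independent of the sequence, with `β_n = P(T ≥ n) > 0`.
If `Σ_n (m̂_{n+1} − m̂_n)·1_{T ≥ n}/β_n` converges absolutely in `L¹`, then the randomised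
estimator `Ẑ = Σ_{n=0}^T (m̂_{n+1} − m̂_n)/β_n` satisfies `E[Ẑ] = m`. -/
theorem stmt_10 {Ω : Type*} [MeasureSpace Ω] [IsProbabilityMeasure (ℙ : Measure Ω)]
    (mh : ℕ → Ω → ℝ) (hmeas : ∀ n, Measurable (mh n)) (h0 : mh 0 = fun _ => 0)
    (mlim : Ω → ℝ) (hlimmeas : Measurable mlim) (hint : Integrable mlim ℙ)
    (hconv : ∀ᵐ ω ∂ℙ, Filter.Tendsto (fun n => mh n ω) Filter.atTop (nhds (mlim ω)))
    (T : Ω → ℕ) (hT : Measurable T)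
    (β : ℕ → ℝ) (hβ : ∀ n, β n = (ℙ {ω | n ≤ T ω}).toReal) (hβpos : ∀ n, 0 < β n)
    (hindep : IndepFun T (fun ω => fun n => mh n ω) ℙ)
    (hL1 : ∑' n : ℕ,
        (∫⁻ ω in {ω | n ≤ T ω}, ENNReal.ofReal (|mh (n+1) ω - mh n ω| / β n) ∂ℙ) ≠ ⊤) :
    ∫ ω, (∑ n ∈ Finset.range (T ω + 1), (mh (n+1) ω - mh n ω) / β n) ∂ℙ
      = ∫ ω, mlim ω ∂ℙ :=
  stmt_10_general mh hmeas h0 mlim hconv T hT β hβ hβpos hindep hL1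
end

section
/- Fix real numbers β > 0, q ∈ ℝ, q_i > 0 with Σ√q_i < ∞. The function (β_i)_{i≥1} ↦ (β + Σ_i β_i)(q + Σ_i q_i/β_i) over positive sequences has a global minimiser if and only if q > 0, in which case the minimiser is β_i = √(β/q)·√q_i. -/
/-!
Termwise AM–GM with a free scale `t > 0` gives `2 √(q_i) ≤ t β_i + q_i / (t β_i)` and
`2 √(βq) ≤ t β + q / t`; summing and choosing `t` optimally shows that every admissible
sequence costs at least `(√(βq) + Σ √q_i)²`, which is exactly the cost of `β_i = √(β/q) √q_i`.
If `q ≤ 0`, doubling every `β_i` changes the cost by `q Σ β_i - β Σ (q_i/β_i) / 2 < 0`, so no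
admissible sequence is optimal.
-/

open Real

def Admissible (qq b : ℕ → ℝ) : Prop :=
  (∀ i, 0 < b i) ∧ Summable b ∧ Summable fun i => qq i / b i

noncomputable def costVariance (β q : ℝ) (qq b : ℕ → ℝ) : ℝ :=
  (β + ∑' i, b i) * (q + ∑' i, qq i / b i)

lemma two_mul_sqrt_mul_le {t x y : ℝ} (ht : 0 < t) (hx : 0 ≤ x) (hy : 0 ≤ y) :
    2 * √(x * y) ≤ t * x + y / t := by
  rw [← sub_nonneg, show t * x + y / t - 2 * √(x * y) = (t * √x - √y) ^ 2 / t by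
    field_simp; rw [sub_sq, mul_pow, sq_sqrt hx, sq_sqrt hy, sqrt_mul hx]; ring]
  positivity

lemma sq_le_mul_of_forall_two_mul_le {A X Y : ℝ} (hA : 0 < A) (hX : 0 < X)
    (h : ∀ t > 0, 2 * A ≤ t * X + Y / t) : A ^ 2 ≤ X * Y := by
  have key := h (A / X) (div_pos hA hX)
  rw [div_mul_cancel₀ _ hX.ne', div_div_eq_mul_div] at key
  have : A * A ≤ Y * X := (le_div_iff₀ hA).1 (by linarith)
  nlinarith

lemma two_mul_sqrt_add_tsum_le {β q : ℝ} (hβ : 0 ≤ β) (hq : 0 ≤ q) {qq b : ℕ → ℝ}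
    (hqq : ∀ i, 0 ≤ qq i) (hsum : Summable fun i => √(qq i)) (hb : Admissible qq b)
    {t : ℝ} (ht : 0 < t) :
    2 * (√(β * q) + ∑' i, √(qq i))
      ≤ t * (β + ∑' i, b i) + (q + ∑' i, qq i / b i) / t := by
  obtain ⟨hpos, hsb, hsd⟩ := hb
  have hterm : ∀ i, 2 * √(qq i) ≤ t * b i + qq i / b i / t := fun i => by
    have h := two_mul_sqrt_mul_le ht (hpos i).le (div_nonneg (hqq i) (hpos i).le)
    rwa [mul_div_cancel₀ _ (hpos i).ne'] at h
  have hseq : 2 * ∑' i, √(qq i) ≤ t * ∑' i, b i + (∑' i, qq i / b i) / t := by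
    rw [← tsum_mul_left, ← tsum_mul_left, ← tsum_div_const,
      ← (hsb.mul_left t).tsum_add (hsd.div_const t)]
    exact (hsum.mul_left 2).tsum_le_tsum hterm ((hsb.mul_left t).add (hsd.div_const t))
  calc 2 * (√(β * q) + ∑' i, √(qq i))
      = 2 * √(β * q) + 2 * ∑' i, √(qq i) := mul_add _ _ _
    _ ≤ (t * β + q / t) + (t * ∑' i, b i + (∑' i, qq i / b i) / t) := add_le_add (two_mul_sqrt_mul_le ht hβ hq) hseq
    _ = t * (β + ∑' i, b i) + (q + ∑' i, qq i / b i) / t := by ring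

lemma sq_sqrt_add_tsum_le_costVariance {β q : ℝ} (hβ : 0 < β) (hq : 0 < q) {qq b : ℕ → ℝ}
    (hqq : ∀ i, 0 ≤ qq i) (hsum : Summable fun i => √(qq i)) (hb : Admissible qq b) :
    (√(β * q) + ∑' i, √(qq i)) ^ 2 ≤ costVariance β q qq b :=
  sq_le_mul_of_forall_two_mul_le
    (add_pos_of_pos_of_nonneg (sqrt_pos.2 (mul_pos hβ hq)) (tsum_nonneg fun _ => sqrt_nonneg _))
    (add_pos_of_pos_of_nonneg hβ (tsum_nonneg fun i => (hb.1 i).le))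
    fun _ ht => two_mul_sqrt_add_tsum_le hβ.le hq.le hqq hsum hb ht

lemma div_const_mul_sqrt (c x : ℝ) : x / (c * √x) = √x / c := by
  rw [div_mul_eq_div_div_swap, div_sqrt]

lemma admissible_const_mul_sqrt {c : ℝ} (hc : 0 < c) {qq : ℕ → ℝ} (hqq : ∀ i, 0 < qq i)
    (hsum : Summable fun i => √(qq i)) : Admissible qq fun i => c * √(qq i) :=
  ⟨fun i => mul_pos hc (sqrt_pos.2 (hqq i)), hsum.mul_left c,
    (hsum.div_const c).congr fun _ => (div_const_mul_sqrt _ _).symm⟩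

lemma costVariance_sqrt_div_mul_sqrt {β q : ℝ} (hβ : 0 < β) (hq : 0 < q) (qq : ℕ → ℝ) :
    costVariance β q qq (fun i => √(β / q) * √(qq i)) = (√(β * q) + ∑' i, √(qq i)) ^ 2 := by
  have hβq : 0 < β / q := div_pos hβ hq
  have hcq : √(β / q) * q = √(β * q) := by
    rw [show β * q = β / q * q ^ 2 by field_simp, sqrt_mul hβq.le, sqrt_sq hq.le]
  have hβc : β = √(β / q) * √(β * q) := by
    rw [← hcq, ← mul_assoc, mul_self_sqrt hβq.le, div_mul_cancel₀ _ hq.ne']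
  have hc : 0 < √(β / q) := sqrt_pos.2 hβq
  simp only [costVariance, div_const_mul_sqrt, tsum_mul_left, tsum_div_const]
  set c := √(β / q)
  set s := √(β * q)
  rw [hβc, ← hcq]
  field_simp

lemma costVariance_sqrt_div_mul_sqrt_le {β q : ℝ} (hβ : 0 < β) (hq : 0 < q) {qq b : ℕ → ℝ}
    (hqq : ∀ i, 0 ≤ qq i) (hsum : Summable fun i => √(qq i)) (hb : Admissible qq b) :
    costVariance β q qq (fun i => √(β / q) * √(qq i)) ≤ costVariance β q qq b :=
  (costVariance_sqrt_div_mul_sqrt hβ hq qq).trans_le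
    (sq_sqrt_add_tsum_le_costVariance hβ hq hqq hsum hb)

lemma admissible_two_mul {qq b : ℕ → ℝ} (hb : Admissible qq b) :
    Admissible qq fun i => 2 * b i :=
  ⟨fun i => mul_pos two_pos (hb.1 i), hb.2.1.mul_left 2,
    (hb.2.2.div_const 2).congr fun _ => by rw [div_mul_eq_div_div_swap]⟩

lemma costVariance_two_mul_lt {β q : ℝ} (hβ : 0 < β) (hq : q ≤ 0) {qq b : ℕ → ℝ}
    (hqq : ∀ i, 0 < qq i) (hb : Admissible qq b) :
    costVariance β q qq (fun i => 2 * b i) < costVariance β q qq b := by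
  obtain ⟨hpos, hsb, hsd⟩ := hb
  have hB : 0 ≤ ∑' i, b i := tsum_nonneg fun i => (hpos i).le
  have hQ : 0 < ∑' i, qq i / b i :=
    hsd.tsum_pos (fun i => (div_pos (hqq i) (hpos i)).le) 0 (div_pos (hqq 0) (hpos 0))
  simp only [costVariance, div_mul_eq_div_div_swap, tsum_mul_left, tsum_div_const]
  nlinarith [mul_pos hβ hQ, mul_nonpos_of_nonneg_of_nonpos hB hq]

/-- Fix `β > 0`, `q ∈ ℝ`, and `q_i > 0` with `Σ √q_i < ∞`. The function
`(β_i) ↦ (β + Σ_i β_i)(q + Σ_i q_i/β_i)`, over positive sequences (with both series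
summable), has a global minimiser if and only if `q > 0`, in which case the minimiser
is `β_i = √(β/q)·√q_i`. -/
theorem stmt_13 (β : ℝ) (hβ : 0 < β) (q : ℝ) (qq : ℕ → ℝ) (hqq : ∀ i, 0 < qq i)
    (hsum : Summable fun i => Real.sqrt (qq i)) :
    ((∃ b : ℕ → ℝ,
        ((∀ i, 0 < b i) ∧ Summable b ∧ Summable (fun i => qq i / b i)) ∧
        ∀ b' : ℕ → ℝ,
          ((∀ i, 0 < b' i) ∧ Summable b' ∧ Summable (fun i => qq i / b' i)) →
          (β + ∑' i, b i) * (q + ∑' i, qq i / b i)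
            ≤ (β + ∑' i, b' i) * (q + ∑' i, qq i / b' i))
      ↔ 0 < q) ∧
    (0 < q →
      ((∀ i, 0 < Real.sqrt (β/q) * Real.sqrt (qq i)) ∧
        Summable (fun i => Real.sqrt (β/q) * Real.sqrt (qq i)) ∧
        Summable (fun i => qq i / (Real.sqrt (β/q) * Real.sqrt (qq i)))) ∧
      ∀ b' : ℕ → ℝ,
        ((∀ i, 0 < b' i) ∧ Summable b' ∧ Summable (fun i => qq i / b' i)) →
        (β + ∑' i, Real.sqrt (β/q) * Real.sqrt (qq i))
            * (q + ∑' i, qq i / (Real.sqrt (β/q) * Real.sqrt (qq i)))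
          ≤ (β + ∑' i, b' i) * (q + ∑' i, qq i / b' i)) := by
  have optimal : 0 < q → Admissible qq (fun i => √(β / q) * √(qq i)) ∧
      ∀ b', Admissible qq b' →
        costVariance β q qq (fun i => √(β / q) * √(qq i)) ≤ costVariance β q qq b' :=
    fun hq => ⟨admissible_const_mul_sqrt (sqrt_pos.2 (div_pos hβ hq)) hqq hsum,
      fun _ => costVariance_sqrt_div_mul_sqrt_le hβ hq (fun i => (hqq i).le) hsum⟩
  refine ⟨⟨fun ⟨b, hb, hmin⟩ => ?_, fun hq => ⟨_, optimal hq⟩⟩, optimal⟩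
  by_contra! hq
  exact (hmin _ (admissible_two_mul hb)).not_gt (costVariance_two_mul_lt hβ hq hqq hb)
end

section
/- For a Pareto random variable X with P(X > x) = min(1, x^{-a}), a > 1, the mean is m = a/(a−1), and for N such that a > 2N/(2N−1), the ideal-estimator variance 2∫_0^∞∫_0^x p_x p_{x'}^{1−1/N} dx' dx − m^2 equals a/(N(a−1)^2(2(a−1) − a/N)) = m(m−1)^2/(2N − m). -/
open MeasureTheory Set Real

/-!
Both integrals are split at `1`, where the tail `min 1 (x ^ (-a))` switches from `1` to
`x ^ (-a)`. Since `(min 1 (y ^ (-a))) ^ (1 - 1/N)` is again such a tail, with exponent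
`b = a (1 - 1/N)`, the double integral reduces to
`∫_1^∞ x^(-a) ∫_1^x y^(-b) dy dx = 1 / ((a - 1) (a + b - 2))`, which is finite exactly when
`a + b > 2`, i.e. `a > 2N/(2N - 1)`. In the borderline case `b = 1` the inner integral is `log x`
and the substitution `x = exp t` turns the outer one into the Gamma integral `∫_0^∞ t e^{-(a-1)t}`.
-/

section

variable {a b c x y : ℝ}

lemma min_one_rpow_neg_of_le_one (hc : 0 ≤ c) (hy : 0 < y) (hy1 : y ≤ 1) :
    min 1 (y ^ (-c)) = 1 :=
  min_eq_left (one_le_rpow_of_pos_of_le_one_of_nonpos hy hy1 (neg_nonpos.2 hc))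

lemma min_one_rpow_neg_of_one_le (hc : 0 ≤ c) (hy : 1 ≤ y) :
    min 1 (y ^ (-c)) = y ^ (-c) :=
  min_eq_right (rpow_le_one_of_one_le_of_nonpos hy (neg_nonpos.2 hc))

lemma min_one_rpow_neg_rpow (ha : 0 ≤ a) (hc : 0 ≤ c) (hy : 0 < y) :
    (min 1 (y ^ (-a))) ^ c = min 1 (y ^ (-(a * c))) := by
  rcases le_total y 1 with hy1 | hy1
  · rw [min_one_rpow_neg_of_le_one ha hy hy1, min_one_rpow_neg_of_le_one (by positivity) hy hy1,
      one_rpow]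
  · rw [min_one_rpow_neg_of_one_le ha hy1, min_one_rpow_neg_of_one_le (by positivity) hy1,
      ← rpow_mul hy.le, neg_mul]

lemma integrableOn_Ioc_min_one_rpow_neg (c x : ℝ) :
    IntegrableOn (fun y => min 1 (y ^ (-c))) (Ioc 0 x) := by
  refine Measure.integrableOn_of_bounded measure_Ioc_lt_top.ne
    (by fun_prop : Measurable fun y : ℝ => min 1 (y ^ (-c))).aestronglyMeasurable (M := 1) ?_
  refine (ae_restrict_iff' measurableSet_Ioc).2 (ae_of_all _ fun y hy => ?_)
  rw [norm_of_nonneg (le_min zero_le_one (rpow_nonneg hy.1.le _))]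
  exact min_le_left _ _

lemma integral_Ioc_min_one_rpow_neg_of_le_one (hc : 0 ≤ c) (hx : 0 ≤ x) (hx1 : x ≤ 1) :
    ∫ y in Ioc 0 x, min 1 (y ^ (-c)) = x := by
  rw [setIntegral_congr_fun measurableSet_Ioc
    fun y hy => min_one_rpow_neg_of_le_one hc hy.1 (hy.2.trans hx1)]
  simp [hx]

lemma integral_Ioo_min_one_rpow_neg_of_one_le (hc : 0 ≤ c) (hx : 1 ≤ x) :
    ∫ y in Ioo 0 x, min 1 (y ^ (-c)) = 1 + ∫ y in (1:ℝ)..x, y ^ (-c) := by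
  rw [← integral_Ioc_eq_integral_Ioo, ← Ioc_union_Ioc_eq_Ioc zero_le_one hx,
    setIntegral_union (Ioc_disjoint_Ioc_of_le le_rfl) measurableSet_Ioc
      (integrableOn_Ioc_min_one_rpow_neg c 1)
      ((integrableOn_Ioc_min_one_rpow_neg c x).mono_set (Ioc_subset_Ioc_left zero_le_one)),
    integral_Ioc_min_one_rpow_neg_of_le_one hc zero_le_one le_rfl,
    intervalIntegral.integral_of_le hx]
  congr 1
  exact setIntegral_congr_fun measurableSet_Ioc fun y hy => min_one_rpow_neg_of_one_le hc hy.1.le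

lemma integral_Ioi_one_rpow_neg (hc : 1 < c) : ∫ x in Ioi 1, x ^ (-c) = 1 / (c - 1) := by
  rw [integral_Ioi_rpow_of_lt (by linarith) one_pos, one_rpow, show -c + 1 = -(c - 1) by ring,
    neg_div_neg_eq]

lemma integral_Ioi_one_rpow_neg_mul_log (ha : 1 < a) :
    ∫ x in Ioi 1, x ^ (-a) * log x = 1 / (a - 1) ^ 2 := calc
  _ = ∫ x in Ioi 1, x⁻¹ • (log x ^ ((2:ℝ) - 1) * exp (-((a - 1) * log x))) := by
    refine setIntegral_congr_fun measurableSet_Ioi fun x (hx : 1 < x) => ?_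
    have hx0 : 0 < x := one_pos.trans hx
    have hpow : x ^ (-1 : ℝ) * x ^ (1 - a) = x ^ (-a) := by rw [← rpow_add hx0]; ring_nf
    rw [smul_eq_mul, show (2:ℝ) - 1 = 1 by norm_num, rpow_one,
      show -((a - 1) * log x) = log x * (1 - a) by ring, ← rpow_def_of_pos hx0, ← rpow_neg_one,
      ← hpow]
    ring
  _ = ∫ t in Ioi 0, t ^ ((2:ℝ) - 1) * exp (-((a - 1) * t)) := by
    simpa only [log_one] using
      integral_comp_log_Ioi (fun t => t ^ ((2:ℝ) - 1) * exp (-((a - 1) * t))) one_pos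
  _ = 1 / (a - 1) ^ 2 := by
    rw [integral_rpow_mul_exp_neg_mul_Ioi two_pos (by linarith), Gamma_two, mul_one, rpow_two,
      div_pow, one_pow]

lemma integral_Ioi_one_rpow_neg_mul_integral_rpow_neg (ha : 1 < a) (hab : 2 < a + b) :
    ∫ x in Ioi 1, x ^ (-a) * ∫ y in (1:ℝ)..x, y ^ (-b) = 1 / ((a - 1) * (a + b - 2)) := by
  have hzero : ∀ x ∈ Ioi (1:ℝ), (0:ℝ) ∉ uIcc 1 x := fun x hx =>
    notMem_uIcc_of_lt one_pos (one_pos.trans hx)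
  rcases eq_or_ne b 1 with rfl | hb
  · have hlog : ∀ x ∈ Ioi (1:ℝ),
        x ^ (-a) * ∫ y in (1:ℝ)..x, y ^ (-(1:ℝ)) = x ^ (-a) * log x := fun x hx => by
      simp only [rpow_neg_one, integral_inv (hzero x hx), div_one]
    rw [setIntegral_congr_fun measurableSet_Ioi hlog, integral_Ioi_one_rpow_neg_mul_log ha]
    ring
  · have hpow : ∀ x ∈ Ioi (1:ℝ), x ^ (-a) * ∫ y in (1:ℝ)..x, y ^ (-b)
        = (1 - b)⁻¹ * (x ^ (-(a + b - 1)) - x ^ (-a)) := fun x (hx : 1 < x) => by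
      have hx0 : 0 < x := one_pos.trans hx
      rw [integral_rpow (Or.inr ⟨by simpa using hb, hzero x hx⟩), one_rpow,
        show x ^ (-(a + b - 1)) = x ^ (-a) * x ^ (-b + 1) by rw [← rpow_add hx0]; ring_nf]
      have : -b + 1 ≠ 0 := by contrapose! hb; linarith
      field_simp
      ring
    have hint : ∀ c : ℝ, 1 < c → IntegrableOn (fun x : ℝ => x ^ (-c)) (Ioi 1) := fun c hc =>
      integrableOn_Ioi_rpow_of_lt (by linarith) one_pos
    rw [setIntegral_congr_fun measurableSet_Ioi hpow, integral_const_mul,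
      integral_sub (hint _ (by linarith)) (hint _ ha), integral_Ioi_one_rpow_neg (by linarith),
      integral_Ioi_one_rpow_neg ha,
      show a + b - 1 - 1 = a + b - 2 by ring]
    have : 1 - b ≠ 0 := sub_ne_zero.2 hb.symm
    have : a + b - 2 ≠ 0 := by linarith
    have : a - 1 ≠ 0 := by linarith
    field_simp
    ring

lemma integral_Ioi_min_one_rpow_neg (ha : 1 < a) :
    ∫ x in Ioi 0, min 1 (x ^ (-a)) = a / (a - 1) := by
  have ha0 : 0 ≤ a := by linarith
  have htail : ∫ x in Ioi 1, min 1 (x ^ (-a)) = 1 / (a - 1) := by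
    rw [setIntegral_congr_fun measurableSet_Ioi fun x (hx : 1 < x) =>
        min_one_rpow_neg_of_one_le ha0 hx.le, integral_Ioi_one_rpow_neg ha]
  have htail_int : IntegrableOn (fun x : ℝ => min 1 (x ^ (-a))) (Ioi 1) :=
    .of_integral_ne_zero (by rw [htail]; exact one_div_ne_zero (by linarith))
  rw [← Ioc_union_Ioi_eq_Ioi (zero_le_one' ℝ), setIntegral_union Ioc_disjoint_Ioi_same
      measurableSet_Ioi (integrableOn_Ioc_min_one_rpow_neg a 1) htail_int,
    integral_Ioc_min_one_rpow_neg_of_le_one ha0 zero_le_one le_rfl, htail]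
  field_simp [show a - 1 ≠ 0 by linarith]
  ring

lemma integral_Ioi_min_one_rpow_neg_mul_integral_Ioo (ha : 1 < a) (hb : 0 ≤ b)
    (hab : 2 < a + b) :
    ∫ x in Ioi 0, min 1 (x ^ (-a)) * ∫ y in Ioo 0 x, min 1 (y ^ (-b))
      = 1 / 2 + 1 / (a - 1) + 1 / ((a - 1) * (a + b - 2)) := by
  have ha0 : 0 ≤ a := by linarith
  have hhead : EqOn (fun x : ℝ => min 1 (x ^ (-a)) * ∫ y in Ioo 0 x, min 1 (y ^ (-b)))
      (fun x => x) (Ioc 0 1) := fun x hx => by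
    dsimp only
    rw [min_one_rpow_neg_of_le_one ha0 hx.1 hx.2, one_mul, ← integral_Ioc_eq_integral_Ioo,
      integral_Ioc_min_one_rpow_neg_of_le_one hb hx.1.le hx.2]
  have htail : EqOn (fun x : ℝ => min 1 (x ^ (-a)) * ∫ y in Ioo 0 x, min 1 (y ^ (-b)))
      (fun x => x ^ (-a) + x ^ (-a) * ∫ y in (1:ℝ)..x, y ^ (-b)) (Ioi 1) := fun x hx => by
    dsimp only
    rw [min_one_rpow_neg_of_one_le ha0 (le_of_lt hx),
      integral_Ioo_min_one_rpow_neg_of_one_le hb (le_of_lt hx), mul_one_add]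
  have hpow_int : IntegrableOn (fun x : ℝ => x ^ (-a)) (Ioi 1) :=
    integrableOn_Ioi_rpow_of_lt (by linarith) one_pos
  have hcross_int : IntegrableOn (fun x => x ^ (-a) * ∫ y in (1:ℝ)..x, y ^ (-b)) (Ioi 1) :=
    .of_integral_ne_zero (by
      rw [integral_Ioi_one_rpow_neg_mul_integral_rpow_neg ha hab]
      exact one_div_ne_zero (mul_ne_zero (by linarith) (by linarith)))
  rw [← Ioc_union_Ioi_eq_Ioi (zero_le_one' ℝ), setIntegral_union Ioc_disjoint_Ioi_same
      measurableSet_Ioi (continuous_id.integrableOn_Ioc.congr_fun hhead.symm measurableSet_Ioc)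
      ((hpow_int.add hcross_int).congr_fun htail.symm measurableSet_Ioi),
    setIntegral_congr_fun measurableSet_Ioc hhead, setIntegral_congr_fun measurableSet_Ioi htail,
    integral_add hpow_int hcross_int, integral_Ioi_one_rpow_neg_mul_integral_rpow_neg ha hab,
    integral_Ioi_one_rpow_neg ha, ← intervalIntegral.integral_of_le zero_le_one, integral_id]
  field_simp [show a - 1 ≠ 0 by linarith]
  ring

end

/-- For a Pareto random variable `X` with `P(X > x) = min(1, x^{-a})`, `a > 1`, the mean
is `m = a/(a−1)`, and for `N` with `a > 2N/(2N−1)` the ideal-estimator variance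
`2∫_0^∞∫_0^x p_x p_{x'}^{1−1/N} dx' dx − m²` equals
`a/(N(a−1)²(2(a−1) − a/N)) = m(m−1)²/(2N − m)`. -/
theorem stmt_15 (a : ℝ) (ha : 1 < a) (N : ℝ) (hN : 2 ≤ N)
    (ha2 : 2*N/(2*N - 1) < a) :
    (∫ x in Ioi (0:ℝ), min 1 (x ^ (-a))) = a/(a-1) ∧
    2 * (∫ x in Ioi (0:ℝ), ∫ y in Ioo (0:ℝ) x,
          (min 1 (x ^ (-a))) * (min 1 (y ^ (-a))) ^ (1 - 1/N))
        - (a/(a-1))^2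
      = a / (N * (a-1)^2 * (2*(a-1) - a/N)) ∧
    a / (N * (a-1)^2 * (2*(a-1) - a/N))
      = (a/(a-1)) * (a/(a-1) - 1)^2 / (2*N - a/(a-1)) := by
  have hN0 : 0 < N := by linarith
  have ha1 : a - 1 ≠ 0 := by linarith
  have hexp : 0 ≤ 1 - 1 / N := by rw [sub_nonneg, div_le_one hN0]; linarith
  have hgap : 0 < 2 * (a - 1) * N - a := by
    rw [div_lt_iff₀ (by linarith)] at ha2; linarith
  have hsum : a + a * (1 - 1 / N) - 2 = (2 * (a - 1) * N - a) / N := by field_simp; ring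
  have hab : 2 < a + a * (1 - 1 / N) := by linarith [div_pos hgap hN0]
  have hinner : ∀ x : ℝ, ∫ y in Ioo 0 x, min 1 (x ^ (-a)) * (min 1 (y ^ (-a))) ^ (1 - 1 / N)
      = min 1 (x ^ (-a)) * ∫ y in Ioo 0 x, min 1 (y ^ (-(a * (1 - 1 / N)))) := fun x => by
    rw [← integral_const_mul]
    exact setIntegral_congr_fun measurableSet_Ioo fun y hy => by
      rw [min_one_rpow_neg_rpow (by linarith) hexp hy.1]
  have hD : 2 * (a - 1) - a / N = (2 * (a - 1) * N - a) / N := by field_simp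
  refine ⟨integral_Ioi_min_one_rpow_neg ha, ?_, ?_⟩
  · simp only [hinner]
    rw [integral_Ioi_min_one_rpow_neg_mul_integral_Ioo ha (mul_nonneg (by linarith) hexp) hab,
      hsum, hD]
    field_simp [hgap.ne']
    ring
  · rw [hD, show 2 * N - a / (a - 1) = (2 * (a - 1) * N - a) / (a - 1) by field_simp]
    field_simp
    ring
end

section
/- The function N ↦ (N^2 + N − 1)·m(m−1)^2/(N + 1 − m) on reals N > m − 1 attains its minimum at N = m − 1 + √(m^2 − m − 1) (for m with m^2 − m − 1 > 0). -/
/-- The function `N ↦ (N² + N − 1)·m(m−1)²/(N + 1 − m)` on reals `N > m − 1` attains its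
minimum at `N = m − 1 + √(m² − m − 1)` (for the Pareto mean `m > 1` with `m² − m − 1 > 0`). -/
theorem stmt_18 (m : ℝ) (hm : 1 < m) (hq : 0 < m^2 - m - 1) :
    m - 1 < m - 1 + Real.sqrt (m^2 - m - 1) ∧
    ∀ N : ℝ, m - 1 < N →
      ((m - 1 + Real.sqrt (m^2 - m - 1))^2 + (m - 1 + Real.sqrt (m^2 - m - 1)) - 1)
          * m * (m-1)^2 / ((m - 1 + Real.sqrt (m^2 - m - 1)) + 1 - m)
        ≤ (N^2 + N - 1) * m * (m-1)^2 / (N + 1 - m) := by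
  have hs : 0 < Real.sqrt (m^2 - m - 1) := Real.sqrt_pos.mpr hq
  have hs2 : Real.sqrt (m^2 - m - 1) ^ 2 = m^2 - m - 1 := Real.sq_sqrt hq.le
  set s := Real.sqrt (m^2 - m - 1) with hsdef
  constructor
  · linarith
  · intro N hN
    have ht : 0 < N + 1 - m := by linarith
    have hden : (0:ℝ) < (m - 1 + s) + 1 - m := by linarith
    rw [div_le_div_iff₀ hden ht]
    have key : 0 ≤ m * (m-1)^2 * s * (N + 1 - m - s)^2 := by positivity
    have hid : (N^2+N-1)*m*(m-1)^2*(m - 1 + s + 1 - m)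
        - ((m-1+s)^2+(m-1+s)-1)*m*(m-1)^2*(N+1-m)
        = m*(m-1)^2*s*(N+1-m-s)^2 := by
      linear_combination (m*(m-1)^2*((N+1-m)-s))*hs2
    linarith [hid, key]
end
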